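/- With M a finitely generated W_n(k)-module and Φ : M → M a σ-linear endomorphism as above, the natural map from M^{Φ=1}/p·M^{Φ=1} to (M/pM)^{Φ=1} is an isomorphism, i.e. M^{1−Φ}/p(M^{1−Φ}) = (M/pM)^{1−Φ}. -/

import Mathlib

/-- An algebraic closure of the finite field `𝔽_q` with `q = p ^ d` elements. -/
abbrev FqBar (p d : ℕ) [Fact p.Prime] : Type :=
  AlgebraicClosure (GaloisField p d)

/-- The Frobenius `σ` of the truncated Witt vectors `W_n(R)` of a ring `R` of characteristic
`p`, induced by the `p`-th power map on `R`: it acts coefficientwise by `x ↦ x ^ p`. -/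
noncomputable def truncatedWittFrobenius (p n : ℕ) [Fact p.Prime] (R : Type*) [CommRing R] :
    TruncatedWittVector p n R → TruncatedWittVector p n R :=
  fun x => TruncatedWittVector.mk p fun i => x.coeff i ^ p

/-! On a module killed by `p`, a `σ`-semilinear `Φ` is a Frobenius-semilinear map of a finite
dimensional `k`-vector space. There, for a given `v`, the orbit `Φ^[i] v` satisfies a linear
relation `Φ^[m + 1] v = ∑ i ≤ m, b i • Φ^[i] v`, and the ansatz `x = ∑ i ≤ m, c i • Φ^[i] v`
solves `x - Φ x = v` as soon as one scalar equation `f s = s` holds in `k`, where `f` is a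
polynomial in `X ^ p`. As `f - X` has derivative `-1`, it has a root because `k` is algebraically
closed. Dévissage along `p • N` shows that `1 - Φ` is surjective on every finitely generated
`W_n(k)`-module, and on its `p`-torsion; these two facts give surjectivity and injectivity of
`M^{Φ=1} / p → (M / p)^{Φ=1}`. -/

open Polynomial Finset

universe u

namespace WittVector

variable {p : ℕ} [Fact p.Prime] {k : Type*} [CommRing k] [CharP k p] [PerfectRing k p]

theorem natCast_dvd_of_coeff_zero_eq_zero {x : WittVector p k} (hx : x.coeff 0 = 0) :
    (p : WittVector p k) ∣ x := by
  obtain ⟨y, hy⟩ := (frobenius_bijective p k).surjective (x.shift 1)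
  refine ⟨y, ?_⟩
  rw [mul_comm, ← verschiebung_frobenius, hy]
  exact eq_iterate_verschiebung (n := 1) (by simpa using hx)

end WittVector

namespace TruncatedWittVector

section Lift

variable {p : ℕ} [Fact p.Prime] {n : ℕ} {R S : Type*} [CommRing R] [CommRing S]

noncomputable def liftOfCoeff (f : WittVector p R →+* S)
    (hf : ∀ x : WittVector p R, (∀ i < n, x.coeff i = 0) → f x = 0) :
    TruncatedWittVector p n R →+* S :=
  RingHom.liftOfRightInverse (WittVector.truncate n) out truncateFun_out
    ⟨f, fun x hx => hf x ((WittVector.mem_ker_truncate n x).1 hx)⟩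

theorem liftOfCoeff_truncate (f : WittVector p R →+* S)
    (hf : ∀ x : WittVector p R, (∀ i < n, x.coeff i = 0) → f x = 0) (x : WittVector p R) :
    liftOfCoeff f hf (WittVector.truncate n x) = f x :=
  RingHom.liftOfRightInverse_comp_apply _ _ _ _ x

end Lift

variable (p : ℕ) [Fact p.Prime] (n : ℕ) (k : Type*) [CommRing k]

noncomputable def frobenius [CharP k p] :
    TruncatedWittVector p n k →+* TruncatedWittVector p n k :=
  liftOfCoeff ((WittVector.truncate n).comp (WittVector.map (_root_.frobenius k p)))
    fun x hx => by
      rw [RingHom.comp_apply, ← RingHom.mem_ker, WittVector.mem_ker_truncate]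
      intro i hi
      rw [WittVector.map_coeff, hx i hi, map_zero]

noncomputable def residue [NeZero n] : TruncatedWittVector p n k →+* k :=
  liftOfCoeff WittVector.constantCoeff fun x hx => by
    rw [WittVector.constantCoeff_apply]
    exact hx 0 (NeZero.pos n)

variable {p n k}

theorem coeff_frobenius [CharP k p] (x : TruncatedWittVector p n k) (i : Fin n) :
    (frobenius p n k x).coeff i = x.coeff i ^ p := by
  obtain ⟨y, rfl⟩ := WittVector.truncate_surjective p n k x
  rw [frobenius, liftOfCoeff_truncate, RingHom.comp_apply, WittVector.coeff_truncate,
    WittVector.map_coeff, WittVector.coeff_truncate, frobenius_def]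

theorem truncatedWittFrobenius_eq_frobenius [CharP k p] :
    truncatedWittFrobenius p n k = frobenius p n k :=
  funext fun x => ext fun i => by rw [coeff_frobenius, truncatedWittFrobenius, coeff_mk]

theorem residue_apply [NeZero n] (x : TruncatedWittVector p n k) :
    residue p n k x = x.coeff ⟨0, NeZero.pos n⟩ := by
  obtain ⟨y, rfl⟩ := WittVector.truncate_surjective p n k x
  rw [residue, liftOfCoeff_truncate, WittVector.coeff_truncate, WittVector.constantCoeff_apply]

theorem residue_frobenius [NeZero n] [CharP k p] (x : TruncatedWittVector p n k) :
    residue p n k (frobenius p n k x) = residue p n k x ^ p := by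
  rw [residue_apply, residue_apply, coeff_frobenius]

theorem residue_surjective [NeZero n] : Function.Surjective (residue p n k) := fun a =>
  ⟨WittVector.truncate n (WittVector.teichmuller p a), by
    rw [residue, liftOfCoeff_truncate, WittVector.constantCoeff_apply,
      WittVector.teichmuller_coeff_zero]⟩

theorem natCast_dvd_of_residue_eq_zero [NeZero n] [CharP k p] [PerfectRing k p]
    {x : TruncatedWittVector p n k} (hx : residue p n k x = 0) :
    (p : TruncatedWittVector p n k) ∣ x := by
  obtain ⟨y, rfl⟩ := WittVector.truncate_surjective p n k x
  rw [residue, liftOfCoeff_truncate, WittVector.constantCoeff_apply] at hx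
  obtain ⟨z, rfl⟩ := WittVector.natCast_dvd_of_coeff_zero_eq_zero hx
  exact ⟨WittVector.truncate n z, by rw [map_mul, map_natCast]⟩

theorem natCast_pow_eq_zero [CharP k p] : (p : TruncatedWittVector p n k) ^ n = 0 := by
  rw [← map_natCast (WittVector.truncate (p := p) (R := k) n), ← map_pow]
  exact ext fun i => by
    rw [WittVector.coeff_truncate, coeff_zero, WittVector.coeff_p_pow_eq_zero p k i.isLt.ne]

instance : Subsingleton (TruncatedWittVector p 0 k) := ⟨fun _ _ => ext fun i => i.elim0⟩

instance {K : Type*} [Field K] [CharP K p] [PerfectRing K p] :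
    IsNoetherianRing (TruncatedWittVector p n K) :=
  isNoetherianRing_of_surjective _ _ (WittVector.truncate n) (WittVector.truncate_surjective p n K)

end TruncatedWittVector

theorem AddSubgroup.exists_sub_apply_eq {G F : Type*} [AddCommGroup G] [FunLike F G G]
    [AddMonoidHomClass F G G] (f : F) (H : AddSubgroup G)
    (hH : ∀ v ∈ H, ∃ x ∈ H, x - f x = v)
    (hquot : ∀ v, ∃ x, x - f x - v ∈ H) (v : G) : ∃ x, x - f x = v := by
  obtain ⟨x, hx⟩ := hquot v
  obtain ⟨y, -, hy⟩ := hH _ hx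
  exact ⟨x - y, by rw [map_sub, sub_sub_sub_comm, hy, sub_sub_cancel]⟩

section Semilinear

variable {R N : Type*} [CommRing R] [AddCommGroup N] [Module R N]

variable (R) in
theorem exists_eq_sum_smul_of_isNoetherian [IsNoetherian R N] (g : ℕ → N) :
    ∃ (m : ℕ) (b : ℕ → R), g (m + 1) = ∑ i ∈ range (m + 1), b i • g i := by
  let spans : ℕ →o Submodule R N :=
    ⟨fun i => Submodule.span R (g '' ↑(range i)), fun i j hij =>
      Submodule.span_mono (Set.image_mono (coe_subset.2 (range_subset_range.2 hij)))⟩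
  obtain ⟨m, hm⟩ := monotone_stabilizes_iff_noetherian.mpr inferInstance spans
  have hmem : g (m + 1) ∈ spans (m + 1) := by
    rw [← hm (m + 1) m.le_succ, hm (m + 2) (by omega)]
    exact Submodule.subset_span ⟨m + 1, by simp, rfl⟩
  obtain ⟨l, hl, hlg⟩ := Finsupp.mem_span_image_iff_linearCombination R |>.1 hmem
  refine ⟨m, l, ?_⟩
  rw [← hlg, Finsupp.linearCombination_apply, Finsupp.sum_of_support_subset l hl _ (by simp)]

def preimageCoeff (σ : R →+* R) (a : R) (b : ℕ → R) : ℕ → R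
  | 0 => 1 + a * b 0
  | i + 1 => σ (preimageCoeff σ a b i) + a * b (i + 1)

theorem sum_sub_map_sum_eq {σ : R →+* R} (Φ : N →ₛₗ[σ] N) {v : N} {m : ℕ}
    {b : ℕ → R}
    (hb : Φ^[m + 1] v = ∑ i ∈ range (m + 1), b i • Φ^[i] v) (a : R) :
    ∑ i ∈ range (m + 1), preimageCoeff σ a b i • Φ^[i] v
        - Φ (∑ i ∈ range (m + 1), preimageCoeff σ a b i • Φ^[i] v)
      = v + (a - σ (preimageCoeff σ a b m)) • Φ^[m + 1] v := by
  set c := preimageCoeff σ a b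
  have hΦ : Φ (∑ i ∈ range (m + 1), c i • Φ^[i] v)
      = ∑ i ∈ range m, σ (c i) • Φ^[i + 1] v + σ (c m) • Φ^[m + 1] v := by
    rw [map_sum, sum_range_succ]
    simp only [map_smulₛₗ, ← Function.iterate_succ_apply' Φ]
  have hc : ∀ i, c (i + 1) - σ (c i) = a * b (i + 1) := fun i => by
    simp only [c, preimageCoeff]; ring
  calc _ = c 0 • v + ∑ i ∈ range m, (c (i + 1) - σ (c i)) • Φ^[i + 1] v
          - σ (c m) • Φ^[m + 1] v := by
        rw [hΦ, sum_range_succ']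
        simp only [sub_smul, sum_sub_distrib, Function.iterate_zero_apply]
        abel
    _ = v + a • ∑ i ∈ range (m + 1), b i • Φ^[i] v - σ (c m) • Φ^[m + 1] v := by
        have hc0 : c 0 = 1 + a * b 0 := rfl
        simp only [hc, hc0, sum_range_succ' _ m, smul_add, add_smul, one_smul,
          smul_sum, mul_smul, Function.iterate_zero_apply]
        abel
    _ = _ := by rw [← hb, sub_smul]; abel

end Semilinear

theorem Polynomial.exists_eval_eq_self_of_derivative_eq_zero {K : Type*} [Field K] [IsAlgClosed K]
    {f : K[X]} (hf : derivative f = 0) : ∃ x, f.eval x = x := by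
  have hdeg : (f - X).degree ≠ 0 := fun h => by
    have hd := congrArg derivative (eq_C_of_degree_le_zero h.le)
    rw [derivative_sub, hf, derivative_X, derivative_C] at hd
    exact one_ne_zero (neg_eq_zero.1 (zero_sub (1 : K[X]) ▸ hd))
  obtain ⟨x, hx⟩ := IsAlgClosed.exists_root _ hdeg
  exact ⟨x, sub_eq_zero.1 (by simpa using hx)⟩

namespace TruncatedWittVector

variable {p : ℕ} [Fact p.Prime] {n : ℕ} {k : Type*}

theorem exists_derivative_eq_zero_residue_preimageCoeff [Field k] [CharP k p] [NeZero n]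
    (b : ℕ → TruncatedWittVector p n k) (i : ℕ) :
    ∃ f : k[X], derivative f = 0 ∧ ∀ t, residue p n k
      (preimageCoeff (frobenius p n k) (frobenius p n k t) b i) = f.eval (residue p n k t) := by
  induction i with
  | zero =>
    refine ⟨C (residue p n k (b 0)) * X ^ p + 1,
      by simp [derivative_X_pow, CharP.cast_eq_zero], fun t => ?_⟩
    simp only [preimageCoeff, map_add, map_mul, map_one, residue_frobenius, eval_add, eval_mul,
      eval_C, eval_pow, eval_X, eval_one]
    ring
  | succ i ih =>
    obtain ⟨f, hf, hft⟩ := ih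
    refine ⟨f ^ p + C (residue p n k (b (i + 1))) * X ^ p,
      by simp [derivative_pow, hf, CharP.cast_eq_zero], fun t => ?_⟩
    simp only [preimageCoeff, map_add, map_mul, residue_frobenius, hft, eval_add, eval_mul,
      eval_C, eval_pow, eval_X]
    ring

variable [Field k] [IsAlgClosed k] [CharP k p] {N : Type u} [AddCommGroup N]
  [Module (TruncatedWittVector p n k) N] [IsNoetherian (TruncatedWittVector p n k) N]

theorem exists_sub_eq_of_natCast_smul_eq_zero (Φ : N →ₛₗ[frobenius p n k] N)
    (hN : ∀ v : N, (p : TruncatedWittVector p n k) • v = 0)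
    (v : N) : ∃ x, x - Φ x = v := by
  rcases eq_or_ne n 0 with rfl | hn
  · have := Module.subsingleton (TruncatedWittVector p 0 k) N
    exact ⟨0, Subsingleton.elim _ _⟩
  have : NeZero n := ⟨hn⟩
  obtain ⟨m, b, hb⟩ :=
    exists_eq_sum_smul_of_isNoetherian (TruncatedWittVector p n k) fun i => Φ^[i] v
  obtain ⟨f, hf, hft⟩ := exists_derivative_eq_zero_residue_preimageCoeff b m
  obtain ⟨s, hs⟩ := exists_eval_eq_self_of_derivative_eq_zero hf
  obtain ⟨t, rfl⟩ := residue_surjective (p := p) (n := n) s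
  -- `t` is chosen so that the error term of `sum_sub_map_sum_eq` lies in `p • N = 0`.
  obtain ⟨z, hz⟩ : (p : TruncatedWittVector p n k) ∣
      t - preimageCoeff (frobenius p n k) (frobenius p n k t) b m :=
    natCast_dvd_of_residue_eq_zero (by rw [map_sub, hft, hs, sub_self])
  refine ⟨_, (sum_sub_map_sum_eq Φ hb (frobenius p n k t)).trans ?_⟩
  rw [← map_sub, hz, map_mul, map_natCast, mul_smul, hN, add_zero]

theorem exists_sub_eq_of_natCast_pow_smul_eq_zero (j : ℕ) (Φ : N →ₛₗ[frobenius p n k] N)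
    (hN : ∀ v : N, (p : TruncatedWittVector p n k) ^ j • v = 0)
    (v : N) : ∃ x, x - Φ x = v := by
  induction j generalizing N with
  | zero => exact ⟨0, by simpa using (hN v).symm⟩
  | succ j ih =>
    let pN := LinearMap.range (LinearMap.lsmul (TruncatedWittVector p n k) N p)
    have hpN : ∀ x ∈ pN, Φ x ∈ pN := by
      rintro _ ⟨y, rfl⟩
      exact ⟨Φ y, by simp⟩
    refine AddSubgroup.exists_sub_apply_eq Φ pN.toAddSubgroup (fun w hw => ?_) (fun w => ?_) v
    · obtain ⟨x, hx⟩ := ih (Φ.restrict hpN) (fun ⟨_, y, hy⟩ => by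
        ext; simp [← hy, ← mul_smul, ← pow_succ, hN]) ⟨w, hw⟩
      exact ⟨x, x.2, congrArg Subtype.val hx⟩
    · have hQ : ∀ x : N ⧸ pN, (p : TruncatedWittVector p n k) • x = 0 := fun x => by
        obtain ⟨x, rfl⟩ := pN.mkQ_surjective x
        rw [← map_smul, Submodule.mkQ_apply, Submodule.Quotient.mk_eq_zero]
        exact ⟨x, rfl⟩
      obtain ⟨x, hx⟩ := exists_sub_eq_of_natCast_smul_eq_zero (pN.mapQ pN Φ hpN) hQ (pN.mkQ w)
      obtain ⟨x, rfl⟩ := pN.mkQ_surjective x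
      refine ⟨x, (Submodule.Quotient.mk_eq_zero pN).1 ?_⟩
      simpa [Submodule.Quotient.mk_sub] using sub_eq_zero.2 hx

theorem exists_sub_eq_of_isNoetherian (Φ : N →ₛₗ[frobenius p n k] N) (v : N) :
    ∃ x, x - Φ x = v :=
  exists_sub_eq_of_natCast_pow_smul_eq_zero n Φ (by simp [natCast_pow_eq_zero]) v

theorem exists_natCast_smul_eq_zero_sub_eq (Φ : N →ₛₗ[frobenius p n k] N) {v : N}
    (hv : (p : TruncatedWittVector p n k) • v = 0) :
    ∃ x, (p : TruncatedWittVector p n k) • x = 0 ∧ x - Φ x = v := by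
  let torsion := LinearMap.ker (LinearMap.lsmul (TruncatedWittVector p n k) N p)
  have hΦ : ∀ x ∈ torsion, Φ x ∈ torsion := fun x hx => by
    simpa [torsion, map_smulₛₗ] using congrArg Φ hx
  obtain ⟨x, hx⟩ := exists_sub_eq_of_natCast_smul_eq_zero (Φ.restrict hΦ)
    (fun x => Subtype.ext x.2) ⟨v, hv⟩
  exact ⟨x, x.2, congrArg Subtype.val hx⟩

end TruncatedWittVector

section FixedPoints

variable {R N : Type*} [Monoid R] [AddCommGroup N] [DistribMulAction R N] (Φ : N →+ N) {a : R}

theorem exists_fixed_sub_eq_smul_of_sub_eq_smul (ha : ∀ x, Φ (a • x) = a • Φ x)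
    (hΦ : ∀ v, ∃ x, x - Φ x = v) {y z : N}
    (hy : Φ y - y = a • z) : ∃ x, Φ x = x ∧ ∃ w, y - x = a • w := by
  obtain ⟨w, rfl⟩ := hΦ z
  refine ⟨y + a • w, ?_, -w, by rw [smul_neg]; abel⟩
  rw [← sub_eq_zero, map_add, ha, add_sub_add_comm, hy, ← smul_sub, ← smul_add,
    sub_add_sub_cancel, sub_self, smul_zero]

theorem exists_fixed_eq_smul_of_fixed_eq_smul (ha : ∀ x, Φ (a • x) = a • Φ x)
    (hΦ : ∀ v, a • v = 0 → ∃ x, a • x = 0 ∧ x - Φ x = v) {x z : N} (hx : Φ x = x)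
    (hxz : x = a • z) : ∃ z, Φ z = z ∧ x = a • z := by
  obtain ⟨u, hu, hux⟩ := hΦ (Φ z - z) (by rw [smul_sub, ← ha, ← hxz, hx, sub_self])
  refine ⟨z + u, ?_, by rw [smul_add, hu, add_zero, hxz]⟩
  rw [map_add, ← sub_eq_zero, add_sub_add_comm, ← neg_sub u, hux]
  abel

end FixedPoints

theorem fixed_points_mod_p
    (p d n : ℕ) [Fact p.Prime]
    (M : Type*) [AddCommGroup M] [Module (TruncatedWittVector p n (FqBar p d)) M]
    [Module.Finite (TruncatedWittVector p n (FqBar p d)) M]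
    (Φ : M →+ M)
    (hΦ : ∀ (c : TruncatedWittVector p n (FqBar p d)) (x : M),
      Φ (c • x) = truncatedWittFrobenius p n (FqBar p d) c • Φ x) :
    (∀ y : M, (∃ z : M, Φ y - y = (p : TruncatedWittVector p n (FqBar p d)) • z) →
      ∃ x : M, Φ x = x ∧ ∃ w : M, y - x = (p : TruncatedWittVector p n (FqBar p d)) • w) ∧
    (∀ x : M, Φ x = x → (∃ z : M, x = (p : TruncatedWittVector p n (FqBar p d)) • z) →
      ∃ z : M, Φ z = z ∧ x = (p : TruncatedWittVector p n (FqBar p d)) • z) := by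
  let Ψ : M →ₛₗ[TruncatedWittVector.frobenius p n (FqBar p d)] M :=
    { Φ with
      map_smul' := by simpa [TruncatedWittVector.truncatedWittFrobenius_eq_frobenius] using hΦ }
  have hp (x : M) : Φ ((p : TruncatedWittVector p n (FqBar p d)) • x) =
      (p : TruncatedWittVector p n (FqBar p d)) • Φ x := by
    rw [hΦ, TruncatedWittVector.truncatedWittFrobenius_eq_frobenius, map_natCast]
  exact ⟨fun y ⟨z, hz⟩ => exists_fixed_sub_eq_smul_of_sub_eq_smul Φ hp
      (TruncatedWittVector.exists_sub_eq_of_isNoetherian Ψ) hz,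
    fun x hx ⟨z, hz⟩ => exists_fixed_eq_smul_of_fixed_eq_smul Φ hp
      (fun _ hv => TruncatedWittVector.exists_natCast_smul_eq_zero_sub_eq Ψ hv) hx hz⟩
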